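/- arXiv:1410.1209 — 3 statements merged into one kernel-verified Lean document; each statement's English description precedes it below -/
import Mathlib

section
/- Let (S, <) be a finite width-extensible poset of width w, and let an indexed chain partition of S into exactly w chains be given. Then this chain partition satisfies conditions ω1, ω2 and ω3. -/
open scoped Classical

/-- Two elements of a poset are *incomparable*: they are distinct and neither
is strictly below the other. -/
def Incomp {α : Type*} [PartialOrder α] (a b : α) : Prop :=
  a ≠ b ∧ ¬ a < b ∧ ¬ b < a

/-- A finset is an *antichain*: its elements are pairwise incomparable. -/
def IsAC {α : Type*} [PartialOrder α] (A : Finset α) : Prop :=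
  ∀ a ∈ A, ∀ b ∈ A, a ≠ b → Incomp a b

/-- The *width* of a finite poset: the maximum cardinality of an antichain. -/
noncomputable def posetWidth (α : Type*) [PartialOrder α] [Fintype α] : ℕ :=
  sSup {c : ℕ | ∃ A : Finset α, IsAC A ∧ A.card = c}

/-- A *width-antichain*: an antichain whose cardinality equals the width. -/
def IsWidthAC {α : Type*} [PartialOrder α] [Fintype α] (A : Finset α) : Prop :=
  IsAC A ∧ A.card = posetWidth α

/-- A finite poset is *width-extensible* if every antichain is contained in
some width-antichain. -/
def WidthExtensible (α : Type*) [PartialOrder α] [Fintype α] : Prop :=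
  ∀ A : Finset α, IsAC A → ∃ W : Finset α, IsWidthAC W ∧ A ⊆ W

/-- An *indexed chain partition* of a poset `α` into `n` chains: numbers
`m i` and maps `c i : {0,…,m i} → α` which are strictly order-preserving
(hence injective), have pairwise disjoint images, and jointly cover `α`. -/
structure ChainPartition (α : Type*) [PartialOrder α] (n : ℕ) where
  m : Fin n → ℕ
  c : Fin n → ℕ → α
  mono : ∀ i : Fin n, ∀ k l : ℕ, k < l → l ≤ m i → c i k < c i l
  disj : ∀ i j : Fin n, i ≠ j → ∀ k l : ℕ, k ≤ m i → l ≤ m j → c i k ≠ c j l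
  cover : ∀ x : α, ∃ i : Fin n, ∃ k : ℕ, k ≤ m i ∧ c i k = x

/-- Condition ω₁ : all initial states are pairwise incomparable. -/
def ChainPartition.Om1 {α : Type*} [PartialOrder α] {n : ℕ} (P : ChainPartition α n) : Prop :=
  ∀ i j : Fin n, i ≠ j → Incomp (P.c i 0) (P.c j 0)

/-- Condition ω₂ : all final states are pairwise incomparable. -/
def ChainPartition.Om2 {α : Type*} [PartialOrder α] {n : ℕ} (P : ChainPartition α n) : Prop :=
  ∀ i j : Fin n, i ≠ j → Incomp (P.c i (P.m i)) (P.c j (P.m j))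

/-- Condition ω₃ : if `[i,s] < [j,t]` and `[j,t-1] < [k,u]` then `[i,s] < [k,u]`
(for `i ≠ j`, `j ≠ k`, `1 ≤ t`). -/
def ChainPartition.Om3 {α : Type*} [PartialOrder α] {n : ℕ} (P : ChainPartition α n) : Prop :=
  ∀ i j k : Fin n, i ≠ j → j ≠ k →
    ∀ s t u : ℕ, 1 ≤ t → s ≤ P.m i → t ≤ P.m j → u ≤ P.m k →
      P.c i s < P.c j t → P.c j (t - 1) < P.c k u → P.c i s < P.c k u

/-- Condition ψ : if `[i,s-1] < [j,t]` then `¬([j,t-1] < [i,s])`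
(for `i ≠ j`, `1 ≤ s`, `1 ≤ t`). -/
def ChainPartition.Psi {α : Type*} [PartialOrder α] {n : ℕ} (P : ChainPartition α n) : Prop :=
  ∀ i j : Fin n, i ≠ j →
    ∀ s t : ℕ, 1 ≤ s → 1 ≤ t → s ≤ P.m i → t ≤ P.m j →
      P.c i (s - 1) < P.c j t → ¬ P.c j (t - 1) < P.c i s

/-- Order on (width-)antichains: `A ≤ B` iff every element of `A` is below
some element of `B`. -/
def ACle {α : Type*} [PartialOrder α] (A B : Finset α) : Prop :=
  ∀ a ∈ A, ∃ b ∈ B, a ≤ b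

/-- A finite poset is *interleaving-consistent* if every width-antichain `W`
that is strictly below some width-antichain can be advanced to a
width-antichain `W'` differing from `W` in exactly one element. -/
def InterleavingConsistent (α : Type*) [PartialOrder α] [Fintype α] : Prop :=
  ∀ W : Finset α, IsWidthAC W →
    (∃ W'' : Finset α, IsWidthAC W'' ∧ ACle W W'' ∧ W ≠ W'') →
    ∃ W' : Finset α, IsWidthAC W' ∧ ACle W W' ∧ W ≠ W' ∧ (W ∩ W').card = W.card - 1

section MyAux

variable {α : Type*} [PartialOrder α] [Fintype α] {n : ℕ}

lemma ChainPartition.mono_le (P : ChainPartition α n) (i : Fin n) {k l : ℕ}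
    (hkl : k ≤ l) (hl : l ≤ P.m i) : P.c i k ≤ P.c i l := by
  rcases lt_or_eq_of_le hkl with h | h
  · exact le_of_lt (P.mono i k l h hl)
  · rw [h]

lemma myIsAC_singleton (x : α) : IsAC ({x} : Finset α) := by
  intro a ha b hb hab
  simp only [Finset.mem_singleton] at ha hb
  subst ha; subst hb; exact absurd rfl hab

lemma myIsAC_pair {a b : α} (h : Incomp a b) : IsAC ({a, b} : Finset α) := by
  intro x hx y hy hxy
  simp only [Finset.mem_insert, Finset.mem_singleton] at hx hy
  rcases hx with rfl | rfl <;> rcases hy with rfl | rfl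
  · exact absurd rfl hxy
  · exact h
  · exact ⟨h.1.symm, h.2.2, h.2.1⟩
  · exact absurd rfl hxy

/-- Every chain meets every width-antichain. -/
lemma myRep (P : ChainPartition α n) (hw : posetWidth α = n)
    {W : Finset α} (hW : IsWidthAC W) (i : Fin n) :
    ∃ a, a ≤ P.m i ∧ P.c i a ∈ W := by
  have hf : ∀ x : α, ∃ p : Fin n × ℕ, p.2 ≤ P.m p.1 ∧ P.c p.1 p.2 = x := fun x => by
    obtain ⟨i, k, hk, he⟩ := P.cover x
    exact ⟨(i, k), hk, he⟩
  choose g hg1 hg2 using hf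
  have hinj : Set.InjOn (fun x => (g x).1) (W : Set α) := by
    intro x hx y hy hxy
    replace hxy : (g x).1 = (g y).1 := hxy
    by_contra hne
    have hic := hW.1 x hx y hy hne
    have hx2 := hg2 x
    have hy2 := hg2 y
    have hy1 := hg1 y
    rw [← hxy] at hy2 hy1
    rcases lt_trichotomy (g x).2 (g y).2 with h | h | h
    · exact hic.2.1 (by rw [← hx2, ← hy2]; exact P.mono _ _ _ h hy1)
    · exact hne (by rw [← hx2, ← hy2, h])
    · exact hic.2.2 (by rw [← hx2, ← hy2]; exact P.mono _ _ _ h (hg1 x))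
  have hcard : (W.image (fun x => (g x).1)).card = W.card :=
    Finset.card_image_of_injOn hinj
  have huniv : W.image (fun x => (g x).1) = Finset.univ := by
    apply Finset.eq_univ_of_card
    rw [hcard, hW.2, hw, Fintype.card_fin]
  have hi : i ∈ W.image (fun x => (g x).1) := huniv ▸ Finset.mem_univ i
  obtain ⟨x, hxW, hfx⟩ := Finset.mem_image.mp hi
  replace hfx : (g x).1 = i := hfx
  have h1 := hg1 x
  have h2 := hg2 x
  rw [hfx] at h1 h2
  exact ⟨(g x).2, h1, by rw [h2]; exact hxW⟩

/-- No element lies strictly between two consecutive elements of a chain. -/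
lemma myNotBetween (P : ChainPartition α n) (hw : posetWidth α = n)
    (hwe : WidthExtensible α) (j : Fin n) (t : ℕ) (ht : 1 ≤ t) (htm : t ≤ P.m j)
    (x : α) (h1 : P.c j (t - 1) < x) (h2 : x < P.c j t) : False := by
  obtain ⟨W, hW, hsub⟩ := hwe {x} (myIsAC_singleton x)
  obtain ⟨b, hb, hbW⟩ := myRep P hw hW j
  have hxW : x ∈ W := hsub (Finset.mem_singleton_self x)
  by_cases heq : P.c j b = x
  · rw [← heq] at h1 h2
    have hb1 : t - 1 < b := by
      by_contra h
      push_neg at h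
      exact absurd (lt_of_le_of_lt (P.mono_le j h (le_trans (Nat.sub_le t 1) htm)) h1)
        (lt_irrefl _)
    have hb2 : b < t := by
      by_contra h
      push_neg at h
      exact absurd (lt_of_lt_of_le h2 (P.mono_le j h hb)) (lt_irrefl _)
    omega
  · have hic := hW.1 _ hbW _ hxW heq
    rcases le_or_gt b (t - 1) with h | h
    · exact hic.2.1 (lt_of_le_of_lt (P.mono_le j h (le_trans (Nat.sub_le t 1) htm)) h1)
    · have h' : t ≤ b := by omega
      exact hic.2.2 (lt_of_lt_of_le h2 (P.mono_le j h' hb))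

/-- Nothing on another chain is strictly below a chain's bottom element. -/
lemma myNotLtBot (P : ChainPartition α n) (hw : posetWidth α = n)
    (hwe : WidthExtensible α) {i j : Fin n} (hij : i ≠ j) {k : ℕ} (hk : k ≤ P.m i) :
    ¬ P.c i k < P.c j 0 := by
  intro hlt
  obtain ⟨W, hW, hsub⟩ := hwe {P.c i k} (myIsAC_singleton _)
  obtain ⟨b, hb, hbW⟩ := myRep P hw hW j
  have hxW : P.c i k ∈ W := hsub (Finset.mem_singleton_self _)
  have hne : P.c i k ≠ P.c j b := P.disj i j hij k b hk hb
  have hic := hW.1 _ hxW _ hbW hne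
  exact hic.2.1 (lt_of_lt_of_le hlt (P.mono_le j (Nat.zero_le b) hb))

/-- A chain's top element is not strictly below anything on another chain. -/
lemma myTopNotLt (P : ChainPartition α n) (hw : posetWidth α = n)
    (hwe : WidthExtensible α) {i j : Fin n} (hij : i ≠ j) {k : ℕ} (hk : k ≤ P.m j) :
    ¬ P.c i (P.m i) < P.c j k := by
  intro hlt
  obtain ⟨W, hW, hsub⟩ := hwe {P.c j k} (myIsAC_singleton _)
  obtain ⟨b, hb, hbW⟩ := myRep P hw hW i
  have hxW : P.c j k ∈ W := hsub (Finset.mem_singleton_self _)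
  have hne : P.c i b ≠ P.c j k := P.disj i j hij b k hb hk
  have hic := hW.1 _ hbW _ hxW hne
  exact hic.2.1 (lt_of_le_of_lt (P.mono_le i hb (le_refl _)) hlt)

end MyAux

/-- Any chain partition of a width-extensible poset into
exactly `width` many chains satisfies ω₁, ω₂ and ω₃. -/
theorem widthExtensible_imp_omegas {α : Type*} [PartialOrder α] [Fintype α]
    {n : ℕ} (P : ChainPartition α n) (hw : posetWidth α = n)
    (hwe : WidthExtensible α) :
    P.Om1 ∧ P.Om2 ∧ P.Om3 := by
  refine ⟨?_, ?_, ?_⟩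
  · -- ω₁
    intro i j hij
    exact ⟨P.disj i j hij 0 0 (Nat.zero_le _) (Nat.zero_le _),
      myNotLtBot P hw hwe hij (Nat.zero_le _),
      myNotLtBot P hw hwe hij.symm (Nat.zero_le _)⟩
  · -- ω₂
    intro i j hij
    exact ⟨P.disj i j hij _ _ (le_refl _) (le_refl _),
      myTopNotLt P hw hwe hij (le_refl _),
      myTopNotLt P hw hwe hij.symm (le_refl _)⟩
  · -- ω₃
    intro i j k hij hjk s t u ht hs htm hu h1 h2
    by_contra hlt
    have hne : P.c i s ≠ P.c k u := by
      intro he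
      exact myNotBetween P hw hwe j t ht htm (P.c i s) (he ▸ h2) h1
    have hnot2 : ¬ P.c k u < P.c i s := by
      intro h
      exact myNotBetween P hw hwe j t ht htm (P.c k u) h2 (lt_trans h h1)
    -- remaining case: c i s and c k u are incomparable
    obtain ⟨W, hW, hsub⟩ := hwe {P.c i s, P.c k u} (myIsAC_pair ⟨hne, hlt, hnot2⟩)
    obtain ⟨b, hb, hbW⟩ := myRep P hw hW j
    have hsW : P.c i s ∈ W := hsub (by simp)
    have huW : P.c k u ∈ W := hsub (by simp)
    rcases le_or_gt b (t - 1) with h | h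
    · have hlow : P.c j b ≤ P.c j (t - 1) :=
        P.mono_le j h (le_trans (Nat.sub_le t 1) htm)
      have hne' : P.c j b ≠ P.c k u := P.disj j k hjk b u hb hu
      exact (hW.1 _ hbW _ huW hne').2.1 (lt_of_le_of_lt hlow h2)
    · have hhigh : P.c j t ≤ P.c j b := P.mono_le j (by omega) hb
      have hne' : P.c i s ≠ P.c j b := P.disj i j hij s b hs hb
      exact (hW.1 _ hsW _ hbW hne').2.1 (lt_of_lt_of_le h1 hhigh)
end

section
/- Let (S, <) be a finite poset of width w that is width-extensible and interleaving-consistent, and let an indexed chain partition of S into exactly w chains be given. Then this chain partition satisfies conditions ω1, ω2, ω3 and ψ. -/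
open scoped Classical

section Aux
set_option linter.unusedSectionVars false

open Finset

variable {α : Type*} [PartialOrder α] [Fintype α] {n : ℕ}

lemma incomp_symm {a b : α} (h : Incomp a b) : Incomp b a :=
  ⟨h.1.symm, h.2.2, h.2.1⟩

lemma singleton_isAC (a : α) : IsAC ({a} : Finset α) := by
  intro x hx y hy hne
  rw [Finset.mem_singleton] at hx hy
  exact absurd (hx.trans hy.symm) hne

variable (P : ChainPartition α n)

lemma cp_mono_le {i : Fin n} {k l : ℕ} (hkl : k ≤ l) (hl : l ≤ P.m i) :
    P.c i k ≤ P.c i l := by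
  rcases lt_or_eq_of_le hkl with h | h
  · exact (P.mono i k l h hl).le
  · rw [h]

lemma cp_idx_eq {i : Fin n} {k l : ℕ} (hk : k ≤ P.m i) (hl : l ≤ P.m i)
    (h : P.c i k = P.c i l) : k = l := by
  rcases lt_trichotomy k l with hh | hh | hh
  · exact absurd h (P.mono i k l hh hl).ne
  · exact hh
  · exact absurd h.symm (P.mono i l k hh hk).ne

lemma cp_comp_unique {X : Finset α} (hX : IsAC X) {i : Fin n} {k l : ℕ}
    (hk : k ≤ P.m i) (hl : l ≤ P.m i) (hkX : P.c i k ∈ X) (hlX : P.c i l ∈ X) :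
    k = l := by
  by_contra hne
  have hne' : P.c i k ≠ P.c i l := fun h => hne (cp_idx_eq P hk hl h)
  have hI := hX _ hkX _ hlX hne'
  rcases lt_trichotomy k l with hh | hh | hh
  · exact hI.2.1 (P.mono i k l hh hl)
  · exact hne hh
  · exact hI.2.2 (P.mono i l k hh hk)

lemma cp_incomp_of_mem {X : Finset α} (hX : IsAC X) {i j : Fin n} (hij : i ≠ j)
    {k l : ℕ} (hk : k ≤ P.m i) (hl : l ≤ P.m j)
    (hkX : P.c i k ∈ X) (hlX : P.c j l ∈ X) : Incomp (P.c i k) (P.c j l) :=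
  hX _ hkX _ hlX (P.disj i j hij k l hk hl)

/-- A width antichain meets every chain. -/
lemma cp_exists_comp (hw : posetWidth α = n) {X : Finset α} (hX : IsWidthAC X)
    (i : Fin n) : ∃ k, k ≤ P.m i ∧ P.c i k ∈ X := by
  classical
  have hinj : Set.InjOn (fun x : α => (P.cover x).choose) X := by
    intro x hx y hy hxy
    have hxy' : (P.cover x).choose = (P.cover y).choose := hxy
    obtain ⟨k, hk, hkx⟩ := (P.cover x).choose_spec
    obtain ⟨l, hl, hly⟩ := (P.cover y).choose_spec
    rw [hxy'] at hk hkx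
    by_contra hne
    have hI := hX.1 x hx y hy hne
    rcases lt_trichotomy k l with hh | hh | hh
    · have h2 := P.mono _ k l hh hl
      rw [hkx, hly] at h2
      exact hI.2.1 h2
    · subst hh
      exact hne (hkx.symm.trans hly)
    · have h2 := P.mono _ l k hh hk
      rw [hkx, hly] at h2
      exact hI.2.2 h2
  have hcard : (X.image (fun x : α => (P.cover x).choose)).card = X.card :=
    Finset.card_image_of_injOn hinj
  have huniv : X.image (fun x : α => (P.cover x).choose) = Finset.univ := by
    apply Finset.eq_univ_of_card
    rw [hcard, hX.2, hw, Fintype.card_fin]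
  have hmem : i ∈ X.image (fun x : α => (P.cover x).choose) := by
    rw [huniv]; exact Finset.mem_univ i
  obtain ⟨x, hxX, hfx⟩ := Finset.mem_image.mp hmem
  have hfx' : (P.cover x).choose = i := hfx
  obtain ⟨k, hk, hkx⟩ := (P.cover x).choose_spec
  rw [hfx'] at hk hkx
  exact ⟨k, hk, by rw [hkx]; exact hxX⟩

lemma cp_om1 (hw : posetWidth α = n) (hwe : WidthExtensible α) : P.Om1 := by
  have key : ∀ i j : Fin n, i ≠ j → ¬ P.c i 0 < P.c j 0 := by
    intro i j hij h
    obtain ⟨X, hX, hsub⟩ := hwe {P.c i 0} (singleton_isAC _)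
    have hiX : P.c i 0 ∈ X := hsub (Finset.mem_singleton_self _)
    obtain ⟨xj, hxj, hjX⟩ := cp_exists_comp P hw hX j
    exact (cp_incomp_of_mem P hX.1 hij (Nat.zero_le _) hxj hiX hjX).2.1
      (lt_of_lt_of_le h (cp_mono_le P (Nat.zero_le _) hxj))
  intro i j hij
  exact ⟨P.disj i j hij 0 0 (Nat.zero_le _) (Nat.zero_le _), key i j hij, key j i hij.symm⟩

lemma cp_om2 (hw : posetWidth α = n) (hwe : WidthExtensible α) : P.Om2 := by
  have key : ∀ i j : Fin n, i ≠ j → ¬ P.c i (P.m i) < P.c j (P.m j) := by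
    intro i j hij h
    obtain ⟨X, hX, hsub⟩ := hwe {P.c j (P.m j)} (singleton_isAC _)
    have hjX : P.c j (P.m j) ∈ X := hsub (Finset.mem_singleton_self _)
    obtain ⟨xi, hxi, hiX⟩ := cp_exists_comp P hw hX i
    exact (cp_incomp_of_mem P hX.1 hij hxi le_rfl hiX hjX).2.1
      (lt_of_le_of_lt (cp_mono_le P hxi le_rfl) h)
  intro i j hij
  exact ⟨P.disj i j hij _ _ le_rfl le_rfl, key i j hij, key j i hij.symm⟩

lemma cp_psi (hw : posetWidth α = n) (hwe : WidthExtensible α)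
    (hic : InterleavingConsistent α) (hom2 : P.Om2) : P.Psi := by
  intro i j hij s t hs ht hsm htm h1 h2
  -- the top width antichain
  set T : Finset α := Finset.univ.image (fun l : Fin n => P.c l (P.m l)) with hTdef
  have hTinj : Function.Injective (fun l : Fin n => P.c l (P.m l)) := by
    intro a b h
    by_contra hne
    exact P.disj a b hne _ _ le_rfl le_rfl h
  have hTcard : T.card = n := by
    rw [hTdef, Finset.card_image_of_injective _ hTinj, Finset.card_univ, Fintype.card_fin]
  have hTac : IsAC T := by
    intro x hx y hy hxy
    obtain ⟨a, -, ha⟩ := Finset.mem_image.mp hx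
    obtain ⟨b, -, hb⟩ := Finset.mem_image.mp hy
    have hab : a ≠ b := by rintro rfl; exact hxy (ha.symm.trans hb)
    rw [← ha, ← hb]
    exact hom2 a b hab
  have hT : IsWidthAC T := ⟨hTac, hTcard.trans hw.symm⟩
  have hACleT : ∀ X : Finset α, ACle X T := by
    intro X x hxX
    obtain ⟨a, k, hk, hck⟩ := P.cover x
    exact ⟨P.c a (P.m a), Finset.mem_image_of_mem _ (Finset.mem_univ a),
      by rw [← hck]; exact cp_mono_le P hk le_rfl⟩
  -- measure
  set f : α → ℕ := fun x => (Finset.univ.filter (fun y => x < y)).card with hfdef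
  set μ : Finset α → ℕ := fun X => ∑ x ∈ X, f x with hμdef
  -- main induction
  have key : ∀ N : ℕ, ∀ X : Finset α, IsWidthAC X →
      (∀ a, a ≤ P.m i → P.c i a ∈ X → a < s) → μ X < N → False := by
    intro N
    induction N with
    | zero => intro X _ _ h; exact absurd h (Nat.not_lt_zero _)
    | succ N ih =>
      intro X hX hNA hμX
      obtain ⟨xi, hxi, hxiX⟩ := cp_exists_comp P hw hX i
      obtain ⟨xj, hxj, hxjX⟩ := cp_exists_comp P hw hX j
      have hxis : xi < s := hNA xi hxi hxiX
      have hxjt : xj < t := by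
        by_contra h
        push_neg at h
        have hlt : P.c i xi < P.c j xj :=
          lt_of_le_of_lt (cp_mono_le P (by omega : xi ≤ s - 1) (by omega))
            (lt_of_lt_of_le h1 (cp_mono_le P h hxj))
        exact (cp_incomp_of_mem P hX.1 hij hxi hxj hxiX hxjX).2.1 hlt
      have hXT : X ≠ T := by
        intro hEq
        have hmem : P.c i (P.m i) ∈ X := by
          rw [hEq]; exact Finset.mem_image_of_mem _ (Finset.mem_univ i)
        have := cp_comp_unique P hX.1 hxi le_rfl hxiX hmem
        omega
      obtain ⟨X', hX', hle, hne, hcard⟩ := hic X hX ⟨T, hT, hACleT X, hXT⟩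
      have hn : 0 < n := i.pos
      have hXn : X.card = n := hX.2.trans hw
      have hX'n : X'.card = n := hX'.2.trans hw
      have hIcard : (X ∩ X').card = n - 1 := by rw [hcard, hXn]
      -- the element of X not in X'
      have hne2 : X ∩ X' ≠ X := by
        intro h
        rw [h, hXn] at hIcard
        omega
      obtain ⟨a, haX, haI⟩ := Finset.exists_of_ssubset
        (lt_of_le_of_ne Finset.inter_subset_left hne2)
      have haX' : a ∉ X' := fun h => haI (Finset.mem_inter.mpr ⟨haX, h⟩)
      obtain ⟨k0, ak0, hak0, hca⟩ := P.cover a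
      have hcaX : P.c k0 ak0 ∈ X := by rw [hca]; exact haX
      have hIeq : X ∩ X' = X.erase a := by
        apply Finset.eq_of_subset_of_card_le
        · intro x hx
          exact Finset.mem_erase.mpr
            ⟨fun h => haI (h ▸ hx), (Finset.mem_inter.mp hx).1⟩
        · rw [Finset.card_erase_of_mem haX, hXn, hIcard]
      have hshared : ∀ l : Fin n, l ≠ k0 → ∀ cl, cl ≤ P.m l → P.c l cl ∈ X →
          P.c l cl ∈ X' := by
        intro l hl cl hcl hmem
        have hne3 : P.c l cl ≠ a := by
          rw [← hca]; exact P.disj l k0 hl _ _ hcl hak0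
        have hmem2 : P.c l cl ∈ X.erase a := Finset.mem_erase.mpr ⟨hne3, hmem⟩
        rw [← hIeq] at hmem2
        exact (Finset.mem_inter.mp hmem2).2
      obtain ⟨bk0, hbk0, hbX'⟩ := cp_exists_comp P hw hX' k0
      have hbX : P.c k0 bk0 ∉ X := by
        intro h
        have heq := cp_comp_unique P hX.1 hbk0 hak0 h hcaX
        exact haX' (by rw [← hca, ← heq]; exact hbX')
      have hIeq' : X ∩ X' = X'.erase (P.c k0 bk0) := by
        apply Finset.eq_of_subset_of_card_le
        · intro x hx
          exact Finset.mem_erase.mpr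
            ⟨fun h => hbX (h ▸ (Finset.mem_inter.mp hx).1), (Finset.mem_inter.mp hx).2⟩
        · rw [Finset.card_erase_of_mem hbX', hX'n, hIcard]
      -- a < c k0 bk0
      have hab : P.c k0 ak0 < P.c k0 bk0 := by
        obtain ⟨y, hyX', hay⟩ := hle a haX
        have hyne : a ≠ y := fun h => haX' (h ▸ hyX')
        have hyX : y ∉ X := by
          intro hyX
          exact (hX.1 a haX y hyX hyne).2.1 (lt_of_le_of_ne hay hyne)
        have hyI : y ∉ X ∩ X' := fun h => hyX (Finset.mem_inter.mp h).1
        rw [hIeq'] at hyI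
        have hyb : y = P.c k0 bk0 := by
          by_contra h
          exact hyI (Finset.mem_erase.mpr ⟨h, hyX'⟩)
        rw [hca]
        have hanb : a ≠ P.c k0 bk0 := fun h => hbX (h ▸ haX)
        exact lt_of_le_of_ne (hyb ▸ hay) hanb
      -- X' still not advanced
      have hNA' : ∀ a', a' ≤ P.m i → P.c i a' ∈ X' → a' < s := by
        intro a' ha' hmem
        by_cases hk0i : k0 = i
        · by_contra h
          push_neg at h
          have hjX' : P.c j xj ∈ X' := hshared j (by rw [hk0i]; exact hij.symm) xj hxj hxjX
          have hlt : P.c j xj < P.c i a' :=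
            lt_of_le_of_lt (cp_mono_le P (by omega : xj ≤ t - 1) (by omega))
              (lt_of_lt_of_le h2 (cp_mono_le P h ha'))
          exact (cp_incomp_of_mem P hX'.1 hij.symm hxj ha' hjX' hmem).2.1 hlt
        · have hiX' : P.c i xi ∈ X' :=
            hshared i (fun h => hk0i h.symm) xi hxi hxiX
          have := cp_comp_unique P hX'.1 ha' hxi hmem hiX'
          omega
      -- measure decreases
      have hμ1 : μ X = μ (X.erase a) + f a := (Finset.sum_erase_add _ _ haX).symm
      have hμ2 : μ X' = μ (X.erase a) + f (P.c k0 bk0) := by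
        show (∑ x ∈ X', f x) = (∑ x ∈ X.erase a, f x) + f (P.c k0 bk0)
        rw [← Finset.sum_erase_add X' f hbX', ← hIeq', hIeq]
      have hfba : f (P.c k0 bk0) < f (P.c k0 ak0) := by
        apply Finset.card_lt_card
        rw [Finset.ssubset_iff_of_subset]
        · refine ⟨P.c k0 bk0, ?_, ?_⟩
          · exact Finset.mem_filter.mpr ⟨Finset.mem_univ _, hab⟩
          · intro h
            exact lt_irrefl _ (Finset.mem_filter.mp h).2
        · intro y hy
          exact Finset.mem_filter.mpr
            ⟨Finset.mem_univ _, lt_trans hab (Finset.mem_filter.mp hy).2⟩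
      have hfa : f a = f (P.c k0 ak0) := by rw [hca]
      exact ih X' hX' hNA' (by omega)
  obtain ⟨W, hW, hWsub⟩ := hwe {P.c i (s - 1)} (singleton_isAC _)
  have hmemW : P.c i (s - 1) ∈ W := hWsub (Finset.mem_singleton_self _)
  exact key (μ W + 1) W hW
    (fun a ha hmem => by
      have := cp_comp_unique P hW.1 ha (by omega : s - 1 ≤ P.m i) hmem hmemW
      omega)
    (Nat.lt_succ_self _)

lemma cp_om3 (hw : posetWidth α = n) (hwe : WidthExtensible α)
    (hom2 : P.Om2) (hpsi : P.Psi) : P.Om3 := by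
  intro i j k hij hjk s t u ht hsm htm hum h1 h2
  by_cases hik : i = k
  · subst hik
    have hsmi : s < P.m i := by
      rcases lt_or_eq_of_le hsm with h | h
      · exact h
      · exfalso
        rw [h] at h1
        exact (hom2 i j hij).2.1 (lt_of_lt_of_le h1 (cp_mono_le P htm le_rfl))
    have hpsi' := hpsi i j hij (s + 1) t (by omega) ht (by omega) htm
      (by rw [Nat.add_sub_cancel]; exact h1)
    have hsu : s < u := by
      by_contra hh
      push_neg at hh
      exact hpsi' (lt_of_lt_of_le h2 (cp_mono_le P (by omega : u ≤ s + 1) (by omega)))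
    exact P.mono i s u hsu hum
  · have key : ∀ X : Finset α, IsWidthAC X → P.c i s ∈ X →
        ∀ xk, xk ≤ P.m k → P.c k xk ∈ X → xk < u := by
      intro X hX hiX xk hxk hkX
      by_contra h
      push_neg at h
      obtain ⟨xj, hxj, hjX⟩ := cp_exists_comp P hw hX j
      have hxjt : t ≤ xj := by
        by_contra hh
        push_neg at hh
        exact (cp_incomp_of_mem P hX.1 hjk hxj hxk hjX hkX).2.1
          (lt_of_le_of_lt (cp_mono_le P (by omega : xj ≤ t - 1) (by omega))
            (lt_of_lt_of_le h2 (cp_mono_le P h hxk)))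
      exact (cp_incomp_of_mem P hX.1 hij hsm hxj hiX hjX).2.1
        (lt_of_lt_of_le h1 (cp_mono_le P hxjt hxj))
    have hne : P.c i s ≠ P.c k u := P.disj i k hik s u hsm hum
    have hnlt : ¬ P.c k u < P.c i s := by
      intro h
      obtain ⟨X, hX, hsub⟩ := hwe {P.c i s} (singleton_isAC _)
      have hiX : P.c i s ∈ X := hsub (Finset.mem_singleton_self _)
      obtain ⟨xk, hxk, hkX⟩ := cp_exists_comp P hw hX k
      have hlt := key X hX hiX xk hxk hkX
      exact (cp_incomp_of_mem P hX.1 hik hsm hxk hiX hkX).2.2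
        (lt_trans (P.mono k xk u hlt hum) h)
    by_contra hlt
    have hI : Incomp (P.c i s) (P.c k u) := ⟨hne, hlt, hnlt⟩
    have hpair : IsAC ({P.c i s, P.c k u} : Finset α) := by
      intro x hx y hy hxy
      rw [Finset.mem_insert, Finset.mem_singleton] at hx hy
      rcases hx with hx | hx <;> rcases hy with hy | hy
      · exact absurd (hx.trans hy.symm) hxy
      · rw [hx, hy]; exact hI
      · rw [hx, hy]; exact incomp_symm hI
      · exact absurd (hx.trans hy.symm) hxy
    obtain ⟨X, hX, hsub⟩ := hwe _ hpair
    have hiX : P.c i s ∈ X := hsub (Finset.mem_insert_self _ _)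
    have hkX : P.c k u ∈ X := hsub (Finset.mem_insert_of_mem (Finset.mem_singleton_self _))
    have := key X hX hiX u hum hkX
    omega

end Aux

/-- Any chain partition of a width-extensible and
interleaving-consistent poset into exactly `width` many chains satisfies
ω₁, ω₂, ω₃ and ψ. -/
theorem widthExtensible_ic_imp_omegas_psi {α : Type*} [PartialOrder α] [Fintype α]
    {n : ℕ} (P : ChainPartition α n) (hw : posetWidth α = n)
    (hwe : WidthExtensible α) (hic : InterleavingConsistent α) :
    P.Om1 ∧ P.Om2 ∧ P.Om3 ∧ P.Psi := by
  have hom1 := cp_om1 P hw hwe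
  have hom2 := cp_om2 P hw hwe
  have hpsi := cp_psi P hw hwe hic hom2
  have hom3 := cp_om3 P hw hwe hom2 hpsi
  exact ⟨hom1, hom2, hom3, hpsi⟩
end

section
/- Let (S, <) be a finite poset with an indexed chain partition into n chains that satisfies conditions ω1, ω2, ω3 and ψ. Then (S, <) is interleaving-consistent. -/
open scoped Classical

section AuxOmegasPsi

variable {α : Type*} [PartialOrder α] {n : ℕ}

lemma cp_le_iff (P : ChainPartition α n) {i : Fin n} {k l : ℕ} (hk : k ≤ P.m i) (hl : l ≤ P.m i) :
    P.c i k ≤ P.c i l ↔ k ≤ l := by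
  constructor
  · intro h
    by_contra hkl
    push_neg at hkl
    exact lt_irrefl _ (lt_of_le_of_lt h (P.mono i l k hkl hk))
  · intro h
    rcases eq_or_lt_of_le h with rfl | h'
    · exact le_rfl
    · exact (P.mono i k l h' hl).le

lemma cp_inj (P : ChainPartition α n) {i : Fin n} {k l : ℕ} (hk : k ≤ P.m i) (hl : l ≤ P.m i)
    (h : P.c i k = P.c i l) : k = l :=
  le_antisymm ((cp_le_iff P hk hl).mp h.le) ((cp_le_iff P hl hk).mp h.ge)

lemma cp_ac_card_le (P : ChainPartition α n) (A : Finset α) (hA : IsAC A) : A.card ≤ n := by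
  classical
  choose idx kk hkk hc using P.cover
  have h : A.card ≤ (Finset.univ : Finset (Fin n)).card := by
    apply Finset.card_le_card_of_injOn idx (fun a _ => Finset.mem_univ _)
    intro a ha b hb hab
    by_contra hne
    have hI := hA a (by simpa using ha) b (by simpa using hb) hne
    have ha' : P.c (idx b) (kk a) = a := by rw [← hab]; exact hc a
    have hb' : P.c (idx b) (kk b) = b := hc b
    have hka : kk a ≤ P.m (idx b) := hab ▸ hkk a
    rcases lt_trichotomy (kk a) (kk b) with h' | h' | h'
    · have hlt := P.mono (idx b) _ _ h' (hkk b)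
      rw [ha', hb'] at hlt
      exact hI.2.1 hlt
    · have heq := ha'
      rw [h', hb'] at heq
      exact hne heq.symm
    · have hlt := P.mono (idx b) _ _ h' hka
      rw [ha', hb'] at hlt
      exact hI.2.2 hlt
  simpa using h

lemma cp_width_eq [Fintype α] (P : ChainPartition α n) (h1 : P.Om1) : posetWidth α = n := by
  classical
  have hinj : Function.Injective (fun i : Fin n => P.c i 0) := by
    intro i j h
    by_contra hne
    exact P.disj i j hne 0 0 (Nat.zero_le _) (Nat.zero_le _) h
  have hA : IsAC (Finset.univ.image (fun i : Fin n => P.c i 0)) := by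
    intro a ha b hb hab
    simp only [Finset.mem_image, Finset.mem_univ, true_and] at ha hb
    obtain ⟨i, rfl⟩ := ha; obtain ⟨j, rfl⟩ := hb
    exact h1 i j (fun h => hab (by rw [h]))
  have hcard : (Finset.univ.image (fun i : Fin n => P.c i 0)).card = n := by
    rw [Finset.card_image_of_injective _ hinj, Finset.card_univ, Fintype.card_fin]
  have hbdd : ∀ b ∈ {c : ℕ | ∃ A : Finset α, IsAC A ∧ A.card = c}, b ≤ n := by
    rintro b ⟨A, hA', rfl⟩
    exact cp_ac_card_le P A hA'
  apply le_antisymm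
  · exact csSup_le ⟨n, _, hA, hcard⟩ hbdd
  · exact le_csSup ⟨n, hbdd⟩ ⟨_, hA, hcard⟩

lemma cp_widthAC_structure [Fintype α] (P : ChainPartition α n) (h1 : P.Om1) (W : Finset α) (hW : IsWidthAC W) :
    ∃ f : Fin n → ℕ, (∀ i, f i ≤ P.m i) ∧ (∀ i, P.c i (f i) ∈ W) ∧
      (∀ x ∈ W, ∃ i, x = P.c i (f i)) := by
  classical
  choose idx kk hkk hc using P.cover
  have hcard : W.card = n := by rw [hW.2, cp_width_eq P h1]
  have hinj : Set.InjOn idx W := by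
    intro a ha b hb hab
    by_contra hne
    have hI := hW.1 a (by simpa using ha) b (by simpa using hb) hne
    have ha' : P.c (idx b) (kk a) = a := by rw [← hab]; exact hc a
    have hb' : P.c (idx b) (kk b) = b := hc b
    have hka : kk a ≤ P.m (idx b) := hab ▸ hkk a
    rcases lt_trichotomy (kk a) (kk b) with h' | h' | h'
    · have hlt := P.mono (idx b) _ _ h' (hkk b)
      rw [ha', hb'] at hlt
      exact hI.2.1 hlt
    · have heq := ha'
      rw [h', hb'] at heq
      exact hne heq.symm
    · have hlt := P.mono (idx b) _ _ h' hka
      rw [ha', hb'] at hlt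
      exact hI.2.2 hlt
  have himg : W.image idx = Finset.univ := by
    apply Finset.eq_univ_of_card
    rw [Finset.card_image_of_injOn hinj, hcard, Fintype.card_fin]
  have hsurj : ∀ i : Fin n, ∃ a ∈ W, idx a = i := by
    intro i
    have : i ∈ W.image idx := by rw [himg]; exact Finset.mem_univ i
    simpa [Finset.mem_image] using this
  choose g hg1 hg2 using hsurj
  refine ⟨fun i => kk (g i), ?_, ?_, ?_⟩
  · intro i; have h := hkk (g i); rwa [hg2 i] at h
  · intro i; have h := hc (g i); rw [hg2 i] at h; rw [h]; exact hg1 i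
  · intro x hx
    refine ⟨idx x, ?_⟩
    have hgx : g (idx x) = x :=
      hinj (by simpa using hg1 (idx x)) (by simpa using hx) (hg2 (idx x))
    have h2' := hc (g (idx x))
    rw [hg2 (idx x)] at h2'
    exact (h2'.trans hgx).symm

end AuxOmegasPsi

/-- A chain partition satisfying ω₁, ω₂, ω₃ and ψ forces the
poset to be interleaving-consistent. -/
theorem omegas_psi_imp_interleavingConsistent {α : Type*} [PartialOrder α] [Fintype α]
    {n : ℕ} (P : ChainPartition α n)
    (h1 : P.Om1) (h2 : P.Om2) (h3 : P.Om3) (h4 : P.Psi) :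
    InterleavingConsistent α := by
  classical
  intro W hW hex
  obtain ⟨W'', hW'', hle, hne⟩ := hex
  obtain ⟨f, hfm, hfW, hWf⟩ := cp_widthAC_structure P h1 W hW
  obtain ⟨g, hgm, hgW, hWg⟩ := cp_widthAC_structure P h1 W'' hW''
  have hWinc : ∀ i j : Fin n, i ≠ j → Incomp (P.c i (f i)) (P.c j (f j)) := by
    intro i j hij
    exact hW.1 _ (hfW i) _ (hfW j) (P.disj i j hij _ _ (hfm i) (hfm j))
  -- some chain is not maxed out
  have hB : ∃ i, f i < P.m i := by
    by_contra hmax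
    push_neg at hmax
    have hfm' : ∀ i, f i = P.m i := fun i => le_antisymm (hfm i) (hmax i)
    have hg' : ∀ i, g i = P.m i := by
      intro i
      obtain ⟨b, hb, hab⟩ := hle _ (hfW i)
      obtain ⟨j, rfl⟩ := hWg b hb
      rcases eq_or_ne j i with rfl | hji
      · have h' : P.m j ≤ g j := by
          have h'' := hab; rw [hfm' j] at h''
          exact (cp_le_iff P le_rfl (hgm j)).mp h''
        exact le_antisymm (hgm j) h'
      · exfalso
        have h' : P.c i (P.m i) ≤ P.c j (P.m j) := by
          calc P.c i (P.m i) ≤ P.c j (g j) := by rw [← hfm' i]; exact hab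
          _ ≤ P.c j (P.m j) := (cp_le_iff P (hgm j) le_rfl).mpr (hgm j)
        rcases h'.lt_or_eq with h'' | h''
        · exact (h2 i j (Ne.symm hji)).2.1 h''
        · exact P.disj i j (Ne.symm hji) _ _ le_rfl le_rfl h''
    apply hne
    apply Finset.Subset.antisymm
    · intro x hx
      obtain ⟨i, rfl⟩ := hWf x hx
      have h' : P.c i (f i) = P.c i (g i) := by rw [hfm' i, hg' i]
      rw [h']; exact hgW i
    · intro x hx
      obtain ⟨i, rfl⟩ := hWg x hx
      have h' : P.c i (g i) = P.c i (f i) := by rw [hfm' i, hg' i]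
      rw [h']; exact hfW i
  by_cases hall : ∀ i, f i < P.m i → ∃ j, j ≠ i ∧ P.c j (f j) < P.c i (f i + 1)
  · -- every advanceable chain is blocked : contradiction
    exfalso
    have hblock : ∀ i, f i < P.m i →
        ∃ j, j ≠ i ∧ f j < P.m j ∧ P.c j (f j) < P.c i (f i + 1) := by
      intro i hi
      obtain ⟨j, hji, hlt⟩ := hall i hi
      refine ⟨j, hji, ?_, hlt⟩
      by_contra hj
      push_neg at hj
      have hfj : f j = P.m j := le_antisymm (hfm j) hj
      have h' : P.c j (P.m j) < P.c i (P.m i) := by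
        rw [← hfj]
        exact lt_of_lt_of_le hlt ((cp_le_iff P (Nat.succ_le_of_lt hi) le_rfl).mpr
          (Nat.succ_le_of_lt hi))
      exact (h2 j i hji).2.1 h'
    set R : Fin n → Fin n → Prop := fun j i =>
      j ≠ i ∧ f j < P.m j ∧ f i < P.m i ∧ P.c j (f j) < P.c i (f i + 1) with hRdef
    have hasym : ∀ j i, R j i → ¬ R i j := by
      rintro j i ⟨hji, hj, hi, hlt⟩ ⟨hij, hi', hj', hlt'⟩
      have hpsi := h4 j i hji (f j + 1) (f i + 1) (Nat.le_add_left 1 _) (Nat.le_add_left 1 _)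
        (Nat.succ_le_of_lt hj) (Nat.succ_le_of_lt hi)
      simp only [Nat.add_sub_cancel] at hpsi
      exact hpsi hlt hlt'
    have htrans : ∀ k j i, R k j → R j i → R k i := by
      rintro k j i ⟨hkj, hk, hj, hlt1⟩ ⟨hji, hj', hi, hlt2⟩
      have hki : k ≠ i := by
        rintro rfl
        exact hasym j k ⟨hji, hj, hk, hlt2⟩ ⟨hkj, hk, hj, hlt1⟩
      refine ⟨hki, hk, hi, ?_⟩
      have h3' := h3 k j i hkj hji (f k) (f j + 1) (f i + 1) (Nat.le_add_left 1 _)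
        (hfm k) (Nat.succ_le_of_lt hj) (Nat.succ_le_of_lt hi) hlt1
      simp only [Nat.add_sub_cancel] at h3'
      exact h3' hlt2
    haveI : IsTrans (Fin n) R := ⟨fun a b c hab hbc => htrans a b c hab hbc⟩
    haveI : IsIrrefl (Fin n) R := ⟨fun a ha => ha.1 rfl⟩
    have hwf : WellFounded R := Finite.wellFounded_of_trans_of_irrefl R
    obtain ⟨i0, hi0⟩ := hB
    obtain ⟨mEl, hmem, hmin⟩ := hwf.has_min {i | f i < P.m i} ⟨i0, hi0⟩
    obtain ⟨j, hji, hj, hlt⟩ := hblock mEl hmem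
    exact hmin j hj ⟨hji, hj, hmem, hlt⟩
  · -- some advanceable chain is unblocked : advance it
    push_neg at hall
    obtain ⟨i, hi, hnob⟩ := hall
    have hi' : f i + 1 ≤ P.m i := Nat.succ_le_of_lt hi
    have hwv : P.c i (f i) < P.c i (f i + 1) := P.mono i (f i) (f i + 1) (Nat.lt_succ_self _) hi'
    have hwW : P.c i (f i) ∈ W := hfW i
    have hvW : P.c i (f i + 1) ∉ W := by
      intro hvW
      obtain ⟨j, hj⟩ := hWf _ hvW
      rcases eq_or_ne j i with rfl | hji
      · exact Nat.succ_ne_self (f j) (cp_inj P hi' (hfm j) hj)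
      · exact P.disj i j (Ne.symm hji) _ _ hi' (hfm j) hj
    have hWmem : ∀ x ∈ W.erase (P.c i (f i)), ∃ j, j ≠ i ∧ x = P.c j (f j) := by
      intro x hx
      obtain ⟨j, rfl⟩ := hWf x (Finset.mem_of_mem_erase hx)
      refine ⟨j, ?_, rfl⟩
      rintro rfl
      exact (Finset.ne_of_mem_erase hx) rfl
    have key : ∀ x ∈ W.erase (P.c i (f i)), Incomp (P.c i (f i + 1)) x := by
      intro x hx
      obtain ⟨j, hji, rfl⟩ := hWmem x hx
      refine ⟨P.disj i j (Ne.symm hji) _ _ hi' (hfm j), ?_, hnob j hji⟩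
      intro hlt
      exact (hWinc i j (Ne.symm hji)).2.1 (lt_trans hwv hlt)
    have hACW' : IsAC (insert (P.c i (f i + 1)) (W.erase (P.c i (f i)))) := by
      intro a ha b hb hab
      rcases Finset.mem_insert.mp ha with rfl | ha'
      · rcases Finset.mem_insert.mp hb with rfl | hb'
        · exact absurd rfl hab
        · exact key b hb'
      · rcases Finset.mem_insert.mp hb with rfl | hb'
        · have h' := key a ha'
          exact ⟨h'.1.symm, h'.2.2, h'.2.1⟩
        · exact hW.1 a (Finset.mem_of_mem_erase ha') b (Finset.mem_of_mem_erase hb') hab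
    have hcard' : (insert (P.c i (f i + 1)) (W.erase (P.c i (f i)))).card = W.card := by
      rw [Finset.card_insert_of_notMem (fun h => hvW (Finset.mem_of_mem_erase h)),
        Finset.card_erase_of_mem hwW]
      have h1c : 1 ≤ W.card := Finset.card_pos.mpr ⟨_, hwW⟩
      omega
    refine ⟨insert (P.c i (f i + 1)) (W.erase (P.c i (f i))),
      ⟨hACW', by rw [hcard']; exact hW.2⟩, ?_, ?_, ?_⟩
    · intro a ha
      rcases eq_or_ne a (P.c i (f i)) with rfl | hne'
      · exact ⟨_, Finset.mem_insert_self _ _, hwv.le⟩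
      · exact ⟨a, Finset.mem_insert_of_mem (Finset.mem_erase.mpr ⟨hne', ha⟩), le_rfl⟩
    · intro hEq
      apply hvW
      rw [hEq]
      exact Finset.mem_insert_self _ _
    · have hint : W ∩ insert (P.c i (f i + 1)) (W.erase (P.c i (f i)))
          = W.erase (P.c i (f i)) := by
        ext x
        simp only [Finset.mem_inter, Finset.mem_insert, Finset.mem_erase]
        constructor
        · rintro ⟨hxW, rfl | ⟨hxne, _⟩⟩
          · exact absurd hxW hvW
          · exact ⟨hxne, hxW⟩
        · rintro ⟨hxne, hxW⟩
          exact ⟨hxW, Or.inr ⟨hxne, hxW⟩⟩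
      rw [hint, Finset.card_erase_of_mem hwW]
end
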